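/- arXiv:2509.16067 — 3 statements merged into one kernel-verified Lean document; each statement's English description precedes it below -/
import Mathlib

section
/- In the Cournot duopoly, suppose an entrant with slope misperception r̂ > 0 plays quantity aᵢ against a rational resident who plays the true best response a₋ᵢ = (β• - c - r•·aᵢ)/(2r•). If the entrant infers the intercept β̂ = β• + (aᵢ + a₋ᵢ)(r̂ - r•) (making perceived mean price equal true mean price at the observed profile) and aᵢ is a subjective best response to a₋ᵢ under (r̂, β̂), then aᵢ = (β• - c)/(2r̂ + r•). -/
/-- If the entrant with slope misperception r̂ plays aᵢ against the rational
best response a₋ᵢ = (β - c - r·aᵢ)/(2r), infers β̂ = β + (aᵢ + a₋ᵢ)(r̂ - r), and aᵢ is a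
subjective best response to a₋ᵢ under (r̂, β̂), then aᵢ = (β - c)/(2r̂ + r). -/
theorem cournot_entrant_equilibrium_quantity
    (r rhat β c ai : ℝ) (hr : 0 < r) (hrhat : 0 < rhat) (hc : 0 < c) (hβ : c < β)
    (aopp : ℝ) (haopp : aopp = (β - c - r * ai) / (2 * r))
    (βhat : ℝ) (hβhat : βhat = β + (ai + aopp) * (rhat - r))
    (hbr : ai = (βhat - c - rhat * aopp) / (2 * rhat)) :
    ai = (β - c) / (2 * rhat + r) := by
  subst hβhat haopp
  have h2r : (2:ℝ) * r ≠ 0 := by positivity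
  have h2rh : (2:ℝ) * rhat ≠ 0 := by positivity
  have hden : 2 * rhat + r ≠ 0 := by positivity
  field_simp at hbr ⊢
  ring_nf at hbr ⊢
  nlinarith [hbr, sq_nonneg r, sq_nonneg rhat]
end

section
/- The entrant fitness function in the Cournot duopoly, h(r̂) = (1/2)·[a(r̂)·(β• - c) - a(r̂)²·r•] where a(r̂) = (β• - c)/(2r̂ + r•), is uniquely maximized over r̂ > 0 at r̂ = r•/2, where the entrant's quantity equals the Stackelberg quantity (β• - c)/(2r•). -/
/-!
Viewed as a function of the entrant's quantity `q`, the fitness `½ (q (β - c) - q² r)` is a concave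
quadratic, which falls short of its value at the Stackelberg quantity `q* = (β - c) / (2r)` by exactly
`(r / 2) (q - q*)²`. The quantity `a(r̂) = (β - c) / (2r̂ + r)` equals `q*` precisely at `r̂ = r / 2`,
so every other perception yields strictly lower fitness.
-/

theorem div_right_injective₀ {G₀ : Type*} [GroupWithZero G₀] {m : G₀} (hm : m ≠ 0) :
    Function.Injective (m / · : G₀ → G₀) := fun x y hxy => by
  simp only [div_eq_mul_inv] at hxy
  exact inv_injective (mul_right_injective₀ hm hxy)

theorem half_profit_sub_eq_sq (r m q : ℝ) (hr : r ≠ 0) :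
    (1 / 2) * (m / (2 * r) * m - (m / (2 * r)) ^ 2 * r) - (1 / 2) * (q * m - q ^ 2 * r) =
      r / 2 * (q - m / (2 * r)) ^ 2 := by
  field_simp
  ring

theorem half_profit_lt_stackelberg {r m q : ℝ} (hr : 0 < r) (hq : q ≠ m / (2 * r)) :
    (1 / 2) * (q * m - q ^ 2 * r) < (1 / 2) * (m / (2 * r) * m - (m / (2 * r)) ^ 2 * r) := by
  rw [← sub_pos, half_profit_sub_eq_sq r m q hr.ne']
  have : q - m / (2 * r) ≠ 0 := sub_ne_zero.2 hq
  positivity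

/-- The entrant fitness h(r̂) = (1/2)[a(r̂)(β - c) - a(r̂)²r] with
a(r̂) = (β - c)/(2r̂ + r) is uniquely maximized over r̂ > 0 at r̂ = r/2, where the entrant's
quantity equals the Stackelberg quantity (β - c)/(2r). -/
theorem cournot_entrant_fitness_maximizer
    (r β c : ℝ) (hr : 0 < r) (hβ : c < β) :
    let a : ℝ → ℝ := fun rhat => (β - c) / (2 * rhat + r)
    let h : ℝ → ℝ := fun rhat => (1 / 2) * (a rhat * (β - c) - (a rhat) ^ 2 * r)
    (∀ rhat : ℝ, 0 < rhat → rhat ≠ r / 2 → h rhat < h (r / 2)) ∧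
    a (r / 2) = (β - c) / (2 * r) := by
  intro a h
  have ha_stackelberg : a (r / 2) = (β - c) / (2 * r) := by
    simp only [a]
    ring_nf
  refine ⟨fun rhat _ hne => ?_, ha_stackelberg⟩
  have ha_ne : a rhat ≠ (β - c) / (2 * r) := by
    rw [← ha_stackelberg]
    refine (div_right_injective₀ (sub_ne_zero.2 hβ.ne')).ne ?_
    intro hden
    exact hne (by linarith)
  simp only [h, ha_stackelberg]
  exact half_profit_lt_stackelberg hr ha_ne
end

section
/- In the investment game under conditions 5b• < c < 6b• and c < 4b• + m/3 and c < 5b• + m/4: when the misspecified agents face data from the profile (1,1) and infer b̂ = b• + m/2, their unique subjective best response to rival investment 1 is 2; but when they face data from (2,2) and infer b̂ = b• + m/4, their unique subjective best response to rival investment 1 is 1, and to rival investment 2 is 2. -/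
/-- Under 5b• < c < 6b•, c < 4b• + m/3 and c < 5b• + m/4: with inferred
b̂ = b• + m/2 (data from the profile (1,1)) the unique subjective best response to rival
investment 1 is 2; with inferred b̂ = b• + m/4 (data from (2,2)) the unique subjective best
response to rival investment 1 is 1, and to rival investment 2 is 2. -/
theorem investment_game_stability_reversal_responses
    (b m c : ℝ) (hb : 0 < b) (hm : 0 < m) (hc : 0 < c)
    (h1 : 5 * b < c) (h2 : c < 6 * b)
    (h3 : c < 4 * b + m / 3) (h4 : c < 5 * b + m / 4) :
    let v : ℝ → ℝ → ℝ → ℝ := fun ai aopp bhat =>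
      ai * (bhat * (ai + aopp) - m) - (ai - 1) * c
    (v 1 1 (b + m / 2) < v 2 1 (b + m / 2)) ∧
    (v 2 1 (b + m / 4) < v 1 1 (b + m / 4)) ∧
    (v 1 2 (b + m / 4) < v 2 2 (b + m / 4)) := by
  intro v
  refine ⟨by simp only [v]; nlinarith, by simp only [v]; nlinarith, by simp only [v]; nlinarith⟩
end
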